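/- Let X be a finite set with symmetric non-negative function d_X and δ ≥ 0, and let X^δ denote X with the function d_X^δ(x,x') = d_X(x,x') + δ. Then for all a ∈ ℝ≥0: ker⁺_{a+δ}(X^δ) = ker⁺_a(X) and ker⁻_{a+δ}(X^δ) = ker⁻_a(X); consequently the barcode of X^δ is the barcode of X shifted by δ: m^{X^δ}(a + δ) = m^X(a) for all a > 0. -/

import Mathlib

/-!
Adding `δ` to every distance turns the closed Rips graph at scale `a + δ` into the one at
scale `a`, and the open Rips graph at scale `r + δ`, `r > 0`, into the one at scale `r`.
Below scale `δ` the shifted graphs are edgeless, and at scale exactly `δ` they only join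
points at distance `0`, which are already joined at every positive scale of `d`. As
`ker ρ` grows with the graph, the increasing unions defining `ker⁻` therefore agree.
-/

open scoped NNReal
open Module

/-- 1-skeleton of the Vietoris–Rips filtration of `(Z, d)`: edgeless at `r = 0`;
for `r > 0` it has an edge between distinct points at distance at most `r`.
(The adjacency is symmetrized; for symmetric `d` this agrees with the usual definition.) -/
def VR {Z : Type*} (d : Z → Z → ℝ≥0) (r : ℝ≥0) : SimpleGraph Z where
  Adj z z' := z ≠ z' ∧ 0 < r ∧ d z z' ≤ r ∧ d z' z ≤ r
  symm := ⟨by intro z z' h; exact ⟨h.1.symm, h.2.1, h.2.2.2, h.2.2.1⟩⟩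
  loopless := ⟨by intro z h; exact h.1 rfl⟩

/-- "Closed" Vietoris–Rips graph, used for `ker⁺`: at `r = 0` it has the edges between
distinct points at distance `0`; for `r > 0` it coincides with `VR d r`. -/
def VRc {Z : Type*} (d : Z → Z → ℝ≥0) (r : ℝ≥0) : SimpleGraph Z where
  Adj z z' := z ≠ z' ∧ d z z' ≤ r ∧ d z' z ≤ r
  symm := ⟨by intro z z' h; exact ⟨h.1.symm, h.2.2, h.2.1⟩⟩
  loopless := ⟨by intro z h; exact h.1 rfl⟩

lemma VR_mono {Z : Type*} (d : Z → Z → ℝ≥0) {r s : ℝ≥0} (hrs : r ≤ s) :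
    VR d r ≤ VR d s := by
  intro a b hab
  exact ⟨hab.1, hab.2.1.trans_le hrs, hab.2.2.1.trans hrs, hab.2.2.2.trans hrs⟩

/-- The structure map `ρ` from `H₀` of the edgeless graph on `Z` (the free `𝔽₂`-vector
space on `Z`, identified with `Z → 𝔽₂`) to `H₀(G)` (the free `𝔽₂`-vector space on the
connected components of `G`), summing the coefficients over each connected component. -/
noncomputable def rho {Z : Type*} [Fintype Z] (G : SimpleGraph Z) :
    (Z → ZMod 2) →ₗ[ZMod 2] (G.ConnectedComponent → ZMod 2) where
  toFun v c :=
    ∑ z ∈ @Finset.filter _ (fun z => G.connectedComponentMk z = c)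
      (Classical.decPred _) Finset.univ, v z
  map_add' := by
    intro v w; funext c; simp [Finset.sum_add_distrib]
  map_smul' := by
    intro m v; funext c; simp [Finset.mul_sum]

/-- `ker (ρ_{0r})` for the (open) Vietoris–Rips graph `VR d r`. -/
noncomputable def kerVR {Z : Type*} [Fintype Z] (d : Z → Z → ℝ≥0) (r : ℝ≥0) :
    Submodule (ZMod 2) (Z → ZMod 2) := LinearMap.ker (rho (VR d r))

/-- `ker⁺_b`: kernel of `ρ_{0b}`.  For `b > 0` this is `ker (ρ_{0b})` of `VR d b`;
at `b = 0` it is the span of the classes `[z_j] + [z_i]` with `d z_i z_j = 0`. -/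
noncomputable def kerP {Z : Type*} [Fintype Z] (d : Z → Z → ℝ≥0) (b : ℝ≥0) :
    Submodule (ZMod 2) (Z → ZMod 2) := LinearMap.ker (rho (VRc d b))

/-- `ker⁻_b = ⋃_{0 ≤ r < b} ker (ρ_{0r})`, as a submodule (the union is increasing). -/
noncomputable def kerM {Z : Type*} [Fintype Z] (d : Z → Z → ℝ≥0) (b : ℝ≥0) :
    Submodule (ZMod 2) (Z → ZMod 2) := ⨆ r : {r : ℝ≥0 // r < b}, kerVR d (r : ℝ≥0)

/-- Multiplicity of the death value `a` in the barcode: `m(a) = dim ker⁺_a − dim ker⁻_a`. -/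
noncomputable def mult {Z : Type*} [Fintype Z] (d : Z → Z → ℝ≥0) (a : ℝ≥0) : ℕ :=
  finrank (ZMod 2) (kerP d a) - finrank (ZMod 2) (kerM d a)

/-- The induced block function `M_f(a,b)` for the identity relabelling bijection
`f : (Fin n, dX) → (Fin n, dZ)`, `x_i ↦ z_i` (so that `f₀ = id` on `H₀(VR₀)`):
`dim ((f₀ ker⁺_a(X) ∩ ker⁺_b(Z)) / (f₀ ker⁻_a(X) ∩ ker⁺_b(Z) + f₀ ker⁺_a(X) ∩ ker⁻_b(Z)))`. -/
noncomputable def blockFn {Z : Type*} [Fintype Z] (dX dZ : Z → Z → ℝ≥0) (a b : ℝ≥0) : ℕ :=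
  finrank (ZMod 2)
    ((↥(kerP dX a ⊓ kerP dZ b)) ⧸
      ((kerM dX a ⊓ kerP dZ b ⊔ kerP dX a ⊓ kerM dZ b).comap
        (kerP dX a ⊓ kerP dZ b).subtype))

open SimpleGraph

section rho

variable {Z : Type*} [Fintype Z]

open Classical in
theorem rho_apply_of_le {G G' : SimpleGraph Z} (h : G ≤ G') (v : Z → ZMod 2)
    (c' : G'.ConnectedComponent) :
    rho G' v c' = ∑ c with c.map (Hom.ofLE h) = c', rho G v c := by
  simp only [rho, LinearMap.coe_mk, AddHom.coe_mk]
  convert (Finset.sum_fiberwise_eq_sum_filter _ _ G.connectedComponentMk v).symm using 2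
  ext z
  simp

theorem ker_rho_mono {G G' : SimpleGraph Z} (h : G ≤ G') :
    LinearMap.ker (rho G) ≤ LinearMap.ker (rho G') := by
  intro v hv
  rw [LinearMap.mem_ker] at hv ⊢
  funext c'
  simp [rho_apply_of_le h, hv]

theorem rho_bot_apply_mk (v : Z → ZMod 2) (z : Z) :
    rho ⊥ v ((⊥ : SimpleGraph Z).connectedComponentMk z) = v z := by
  simp only [rho, LinearMap.coe_mk, AddHom.coe_mk]
  refine Finset.sum_eq_single_of_mem z (by simp) fun z' hz' hne ↦ absurd ?_ hne
  simpa [ConnectedComponent.eq, reachable_bot] using hz'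

theorem ker_rho_bot : LinearMap.ker (rho (⊥ : SimpleGraph Z)) = ⊥ := by
  refine eq_bot_iff.mpr fun v hv ↦ funext fun z ↦ ?_
  rw [← rho_bot_apply_mk v, LinearMap.mem_ker.mp hv, Pi.zero_apply, Pi.zero_apply]

end rho

section shift

variable {X : Type*} (d : X → X → ℝ≥0) (δ : ℝ≥0)

theorem VR_zero : VR d 0 = ⊥ :=
  le_bot_iff.mp fun _ _ h ↦ (lt_irrefl 0 h.2.1).elim

theorem VR_add_const_eq_bot {r : ℝ≥0} (hr : r < δ) : VR (fun x y ↦ d x y + δ) r = ⊥ :=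
  le_bot_iff.mp fun _ _ h ↦ (hr.trans_le le_add_self).not_ge h.2.2.1

theorem VR_add_const_le {r s : ℝ≥0} (hs : 0 < s) (hrs : r ≤ s + δ) :
    VR (fun x y ↦ d x y + δ) r ≤ VR d s := fun _ _ ⟨hne, _, h₁, h₂⟩ ↦
  ⟨hne, hs, le_of_add_le_add_right (h₁.trans hrs), le_of_add_le_add_right (h₂.trans hrs)⟩

theorem VR_add_const_add {r : ℝ≥0} (hr : 0 < r) :
    VR (fun x y ↦ d x y + δ) (r + δ) = VR d r := by
  ext x y
  simp [VR, hr, add_pos_of_pos_of_nonneg hr]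

theorem VRc_add_const_add (a : ℝ≥0) : VRc (fun x y ↦ d x y + δ) (a + δ) = VRc d a := by
  ext x y
  simp [VRc]

variable [Fintype X]

theorem kerVR_zero : kerVR d 0 = ⊥ := by
  rw [kerVR, VR_zero, ker_rho_bot]

theorem kerVR_le_kerM {r b : ℝ≥0} (hr : r < b) : kerVR d r ≤ kerM d b :=
  le_iSup_of_le (ι := {r : ℝ≥0 // r < b}) ⟨r, hr⟩ le_rfl

theorem kerP_add_const_add (a : ℝ≥0) : kerP (fun x y ↦ d x y + δ) (a + δ) = kerP d a := by
  rw [kerP, kerP, VRc_add_const_add]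

theorem kerM_add_const_add (a : ℝ≥0) : kerM (fun x y ↦ d x y + δ) (a + δ) = kerM d a := by
  refine le_antisymm (iSup_le fun ⟨r, hr⟩ ↦ ?_) (iSup_le fun ⟨r, hr⟩ ↦ ?_) <;> dsimp only
  · rcases lt_or_ge r δ with hrδ | hδr
    · rw [kerVR, VR_add_const_eq_bot d δ hrδ, ker_rho_bot]
      exact bot_le
    have ha : 0 < a := pos_of_lt_add_left (hr.trans_le' hδr)
    have hs : max (r - δ) (a / 2) < a :=
      max_lt ((tsub_lt_iff_right hδr).mpr hr) (half_lt_self ha)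
    refine (ker_rho_mono (VR_add_const_le d δ ?_ ?_)).trans (kerVR_le_kerM d hs)
    · exact lt_max_of_lt_right (half_pos ha)
    · exact tsub_le_iff_right.mp (le_max_left _ _)
  · rcases eq_zero_or_pos r with rfl | hr₀
    · simp [kerVR_zero]
    rw [kerVR, ← VR_add_const_add d δ hr₀]
    exact kerVR_le_kerM _ ((add_lt_add_iff_right δ).mpr hr)

end shift

theorem stmt19_general {X : Type*} [Fintype X] (d : X → X → ℝ≥0) (δ : ℝ≥0) :
    (∀ a : ℝ≥0,
      kerP (fun x y => d x y + δ) (a + δ) = kerP d a ∧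
      kerM (fun x y => d x y + δ) (a + δ) = kerM d a) ∧
    (∀ a : ℝ≥0, 0 < a → mult (fun x y => d x y + δ) (a + δ) = mult d a) :=
  ⟨fun a ↦ ⟨kerP_add_const_add d δ a, kerM_add_const_add d δ a⟩, fun a _ ↦ by
    rw [mult, mult, kerP_add_const_add, kerM_add_const_add]⟩

/-- shifting the symmetric function by `δ` shifts the kernels and the
barcode: `ker⁺_{a+δ}(X^δ) = ker⁺_a(X)`, `ker⁻_{a+δ}(X^δ) = ker⁻_a(X)` for all `a`,
and `m^{X^δ}(a+δ) = m^X(a)` for all `a > 0`. -/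
theorem stmt19 {X : Type*} [Fintype X] (d : X → X → ℝ≥0)
    (hsym : ∀ x x', d x x' = d x' x) (δ : ℝ≥0) :
    (∀ a : ℝ≥0,
      kerP (fun x y => d x y + δ) (a + δ) = kerP d a ∧
      kerM (fun x y => d x y + δ) (a + δ) = kerM d a) ∧
    (∀ a : ℝ≥0, 0 < a → mult (fun x y => d x y + δ) (a + δ) = mult d a) :=
  stmt19_general d δ
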